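/- For every integer n ≥ 2, M_{2n} = 2n − 1 − m_n, where m_k (resp. M_k) is the minimum (resp. maximum) number of alternations among length-k factors of the Thue–Morse sequence. -/

import Mathlib

/-!
A factor of Thue–Morse of length `2n` starting at an odd position is the image `μ(w)` of a
factor `w` of length `n`, and `alt (μ w) = 2n - 1 - alt w`: each block `01`/`10` carries one
alternation, and the boundary between two blocks alternates exactly when the corresponding letters
of `w` agree. A factor of length `2n` at an even position is `μ(w')`, for a factor `w'` of length
`n + 1`, with its first and last letter removed; both sat inside a block, so its count is
`2n - 1 - alt w' ≤ 2n - 1 - alt (w'.take n)`. Hence the maximum is `2n - 1 - m_n`, attained at the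
image of a minimising factor.
-/

/-- The reduction of a word: replace each maximal run of identical characters
by a single character. -/
def red {α : Type*} [DecidableEq α] (w : List α) : List α :=
  w.destutter (· ≠ ·)

/-- The length-`k` factor of the infinite sequence `x` (1-indexed) starting at
position `i`. -/
def factorAt {α : Type*} (x : ℕ → α) (i k : ℕ) : List α :=
  (List.range k).map (fun j => x (i + j))

/-- The reduced factor complexity: the number of length-`n` factors of `x`,
counted up to reduced-equivalence (`red v = red w`). -/
noncomputable def redFactorComplexity {α : Type*} [DecidableEq α]
    (x : ℕ → α) (n : ℕ) : ℕ :=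
  Set.ncard { u : List α | ∃ i ≥ 1, u = red (factorAt x i n) }

/-- The Thue–Morse sequence (1-indexed): `t n` is the parity of the number of
1's in the binary expansion of `n - 1`. -/
def thueMorse (n : ℕ) : Bool :=
  decide ((Nat.digits 2 (n - 1)).sum % 2 = 1)

/-- The number of alternations (occurrences of 01 or 10) in a binary word. -/
def alt (w : List Bool) : ℕ :=
  (List.zipWith (fun a b => a != b) w w.tail).count true

/-- The minimum number of alternations among length-`k` factors of Thue–Morse. -/
noncomputable def tmAltMin (k : ℕ) : ℕ :=
  sInf { a : ℕ | ∃ i ≥ 1, a = alt (factorAt thueMorse i k) }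

/-- The maximum number of alternations among length-`k` factors of Thue–Morse. -/
noncomputable def tmAltMax (k : ℕ) : ℕ :=
  sSup { a : ℕ | ∃ i ≥ 1, a = alt (factorAt thueMorse i k) }

/-- The Thue–Morse morphism `0 → 01`, `1 → 10`. -/
def mu (w : List Bool) : List Bool :=
  w.flatMap (fun b => if b then [true, false] else [false, true])

/-- The regular paperfolding sequence (1-indexed): writing `n = n' * 2^k` with
`n'` odd, `f n = 1` iff `n' ≡ 3 (mod 4)`. -/
def paperfold (n : ℕ) : Bool :=
  decide ((n / 2 ^ (n.factorization 2)) % 4 = 3)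

/-- The reduced abelian complexity: the number of length-`n` factors of `x`,
counted up to the equivalence identifying `v` and `w` whenever `red v` is a
rearrangement of the characters of `red w`. -/
noncomputable def redAbelianComplexity {α : Type*} [DecidableEq α]
    (x : ℕ → α) (n : ℕ) : ℕ :=
  Set.ncard { m : Multiset α | ∃ i ≥ 1, m = ↑(red (factorAt x i n)) }

open Finset

theorem alt_cons_cons (a b : Bool) (l : List Bool) :
    alt (a :: b :: l) = (a != b).toNat + alt (b :: l) := by
  cases a <;> cases b <;> simp [alt, Nat.add_comm]

theorem mu_cons (a : Bool) (w : List Bool) : mu (a :: w) = a :: (!a) :: mu w := by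
  cases a <;> simp [mu]

theorem alt_mu_cons (a : Bool) (l : List Bool) :
    alt (mu (a :: l)) + alt (a :: l) + 1 = 2 * (l.length + 1) := by
  induction l generalizing a with
  | nil => cases a <;> simp [mu, alt]
  | cons b l ih =>
    have hb := ih b
    rw [mu_cons, mu_cons, alt_cons_cons, alt_cons_cons, ← mu_cons, alt_cons_cons, List.length_cons]
    cases a <;> cases b <;> simp <;> omega

-- Truncated subtraction makes this hold for `w = []` as well, both sides being `0`.
theorem alt_mu (w : List Bool) : alt (mu w) = 2 * w.length - 1 - alt w := by
  cases w with
  | nil => simp [mu, alt]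
  | cons a l => have h := alt_mu_cons a l; simp only [List.length_cons]; omega

theorem factorAt_succ {α : Type*} (x : ℕ → α) (i k : ℕ) :
    factorAt x i (k + 1) = x i :: factorAt x (i + 1) k := by
  simp only [factorAt, List.range_succ_eq_map, List.map_cons, List.map_map, Nat.add_zero]
  congr 1
  exact List.map_congr_left fun j _ => congrArg x (by simp; omega)

@[simp]
theorem length_factorAt {α : Type*} (x : ℕ → α) (i k : ℕ) : (factorAt x i k).length = k := by
  simp [factorAt]

theorem alt_factorAt_succ_eq_sum (x : ℕ → Bool) (i k : ℕ) :
    alt (factorAt x i (k + 1)) = ∑ j ∈ range k, (x (i + j) != x (i + j + 1)).toNat := by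
  induction k generalizing i with
  | zero => simp [factorAt, alt]
  | succ k ih =>
    rw [factorAt_succ, factorAt_succ, alt_cons_cons, ← factorAt_succ, ih, sum_range_succ']
    simp only [add_zero, add_assoc, add_comm 1]
    ring

theorem alt_factorAt_le_succ (x : ℕ → Bool) (i k : ℕ) :
    alt (factorAt x i k) ≤ alt (factorAt x i (k + 1)) := by
  cases k with
  | zero => simp [factorAt, alt]
  | succ k => rw [alt_factorAt_succ_eq_sum, alt_factorAt_succ_eq_sum, sum_range_succ]; omega

theorem thueMorse_two_mul_add_one (m : ℕ) : thueMorse (2 * m + 1) = thueMorse (m + 1) := by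
  rcases Nat.eq_zero_or_pos m with rfl | hm
  · rfl
  · simp [thueMorse, Nat.digits_def' one_lt_two (by omega : 0 < 2 * m)]

theorem thueMorse_two_mul_add_two (m : ℕ) : thueMorse (2 * m + 2) = !thueMorse (m + 1) := by
  have hdigits := Nat.digits_add 2 one_lt_two 1 m one_lt_two (by simp)
  simp only [thueMorse, Nat.add_sub_cancel, show 2 * m + 2 - 1 = 1 + 2 * m by omega, hdigits,
    List.sum_cons]
  by_cases h : (Nat.digits 2 m).sum % 2 = 1 <;> simp [h] <;> omega

theorem thueMorse_two_mul_add_one_bne (m : ℕ) :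
    (thueMorse (2 * m + 1) != thueMorse (2 * m + 1 + 1)) = true := by
  rw [thueMorse_two_mul_add_one, show 2 * m + 1 + 1 = 2 * m + 2 from rfl,
    thueMorse_two_mul_add_two]
  cases thueMorse (m + 1) <;> rfl

theorem mu_factorAt_thueMorse (j n : ℕ) :
    mu (factorAt thueMorse (j + 1) n) = factorAt thueMorse (2 * j + 1) (2 * n) := by
  induction n generalizing j with
  | zero => rfl
  | succ n ih =>
    rw [factorAt_succ, mu_cons, ih, show 2 * (n + 1) = 2 * n + 1 + 1 by ring, factorAt_succ,
      factorAt_succ, thueMorse_two_mul_add_one, show 2 * j + 1 + 1 = 2 * j + 2 from rfl,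
      thueMorse_two_mul_add_two, show 2 * j + 2 + 1 = 2 * (j + 1) + 1 by ring]

theorem alt_factorAt_thueMorse_odd (j n : ℕ) :
    alt (factorAt thueMorse (2 * j + 1) (2 * n)) =
      2 * n - 1 - alt (factorAt thueMorse (j + 1) n) := by
  rw [← mu_factorAt_thueMorse, alt_mu, length_factorAt]

theorem alt_factorAt_thueMorse_even (j n : ℕ) :
    alt (factorAt thueMorse (2 * j + 2) (2 * n)) =
      2 * n - 1 - alt (factorAt thueMorse (j + 1) (n + 1)) := by
  cases n with
  | zero => rfl
  | succ n =>
    -- The factor at `2 * j + 1` of length `2 * n + 4` is this one flanked by two letters, each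
    -- alternating with its neighbour inside a block `μ(a)`.
    have hodd := alt_factorAt_thueMorse_odd j (n + 2)
    rw [show 2 * (n + 2) = 2 * n + 3 + 1 by ring, alt_factorAt_succ_eq_sum, sum_range_succ',
      sum_range_succ] at hodd
    rw [show 2 * (n + 1) = 2 * n + 1 + 1 by ring, alt_factorAt_succ_eq_sum]
    have hshift : ∀ x, 2 * j + 1 + (x + 1) = 2 * j + 2 + x := fun x => by ring
    rw [show 2 * j + 1 + (2 * n + 1 + 1) = 2 * (j + n + 1) + 1 by ring,
      thueMorse_two_mul_add_one_bne, add_zero, thueMorse_two_mul_add_one_bne] at hodd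
    simp only [hshift, Bool.toNat_true] at hodd
    rw [show n + 1 + 1 = n + 2 from rfl]
    omega

def tmAlts (k : ℕ) : Set ℕ :=
  { a : ℕ | ∃ i ≥ 1, a = alt (factorAt thueMorse i k) }

theorem isLeast_tmAltMin (k : ℕ) : IsLeast (tmAlts k) (tmAltMin k) :=
  ⟨Nat.sInf_mem ⟨_, 1, le_rfl, rfl⟩, fun _ ha => Nat.sInf_le ha⟩

theorem isGreatest_tmAlts_two_mul (n : ℕ) :
    IsGreatest (tmAlts (2 * n)) (2 * n - 1 - tmAltMin n) := by
  have hmin := isLeast_tmAltMin n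
  constructor
  · obtain ⟨i, hi, hi_min⟩ := hmin.1
    obtain ⟨j, rfl⟩ : ∃ j, i = j + 1 := ⟨i - 1, by omega⟩
    exact ⟨2 * j + 1, by omega, by rw [alt_factorAt_thueMorse_odd, hi_min]⟩
  · rintro a ⟨i, hi, rfl⟩
    obtain ⟨j, rfl | rfl⟩ : ∃ j, i = 2 * j + 1 ∨ i = 2 * j + 2 := ⟨(i - 1) / 2, by omega⟩
    · have hmin_le := hmin.2 ⟨j + 1, by omega, rfl⟩
      rw [alt_factorAt_thueMorse_odd]
      omega
    · have hmin_le := hmin.2 ⟨j + 1, by omega, rfl⟩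
      have hmono := alt_factorAt_le_succ thueMorse (j + 1) n
      rw [alt_factorAt_thueMorse_even]
      omega

theorem stmt3_general (n : ℕ) :
    tmAltMax (2 * n) = 2 * n - 1 - tmAltMin n :=
  (isGreatest_tmAlts_two_mul n).csSup_eq

theorem stmt3 (n : ℕ) (hn : 2 ≤ n) :
    tmAltMax (2 * n) = 2 * n - 1 - tmAltMin n :=
  stmt3_general n
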